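/- Let A, A′, B, B′ be topological spaces, let f : A → A′ and g : B → B′ be homotopy equivalences, and let ε : Sⁿ⁻¹ × B → A and ε′ : Sⁿ⁻¹ × B′ → A′ be continuous maps satisfying f ∘ ε = ε′ ∘ (id_{Sⁿ⁻¹} × g). Then the induced map f ∪ (id × g) : A ∪_ε (Dⁿ × B) → A′ ∪_{ε′} (Dⁿ × B′) between the adjunction spaces is a homotopy equivalence. -/

import Mathlib

noncomputable section

/-- Two maps of spaces are (freely) homotopic. -/
def PlainHomotopic {X Y : Type} [TopologicalSpace X] [TopologicalSpace Y] (f g : X → Y) :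
    Prop :=
  ∃ H : X × unitInterval → Y, Continuous H ∧ (∀ x, H (x, 0) = f x) ∧ (∀ x, H (x, 1) = g x)

/-- A map of spaces is a homotopy equivalence. -/
def IsHomotopyEquivMap {X Y : Type} [TopologicalSpace X] [TopologicalSpace Y] (f : X → Y) :
    Prop :=
  Continuous f ∧ ∃ g : Y → X, Continuous g ∧
    PlainHomotopic (g ∘ f) id ∧ PlainHomotopic (f ∘ g) id

/-- The `n`-disk. -/
def Dsk (n : ℕ) : Type := Metric.closedBall (0 : EuclideanSpace ℝ (Fin n)) 1

instance (n : ℕ) : TopologicalSpace (Dsk n) := by unfold Dsk; infer_instance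

/-- The boundary `(n-1)`-sphere of the `n`-disk. -/
def bSph (n : ℕ) : Type := Metric.sphere (0 : EuclideanSpace ℝ (Fin n)) 1

instance (n : ℕ) : TopologicalSpace (bSph n) := by unfold bSph; infer_instance

/-- The boundary inclusion `Sⁿ⁻¹ ↪ Dⁿ`. -/
def bSphIncl (n : ℕ) : bSph n → Dsk n := fun z => ⟨z.1, by
  have := z.2
  simp only [Metric.mem_sphere, dist_zero_right] at this
  simp [Dsk, Metric.mem_closedBall, le_of_eq this]⟩

/-- The topological pushout of `f : A → B` and `g : A → C`. -/
def TopPushout {A B C : Type} (f : A → B) (g : A → C) : Type :=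
  Quot (fun x y : B ⊕ C => ∃ a, x = Sum.inl (f a) ∧ y = Sum.inr (g a))

instance {A B C : Type} [TopologicalSpace B] [TopologicalSpace C] (f : A → B) (g : A → C) :
    TopologicalSpace (TopPushout f g) := by unfold TopPushout; infer_instance

/-- The map out of a topological pushout induced by a compatible pair of maps. -/
def TopPushout.desc {A B C D : Type} (f : A → B) (g : A → C) (u : B → D) (v : C → D)
    (h : ∀ a, u (f a) = v (g a)) : TopPushout f g → D :=
  Quot.lift (Sum.elim u v) (by rintro x y ⟨a, rfl, rfl⟩; exact h a)

/-- The adjunction space `A ∪_ε (Dⁿ × B)` obtained by attaching `Dⁿ × B` to `A` along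
`ε : Sⁿ⁻¹ × B → A`. -/
def AttachCell (n : ℕ) {A B : Type} [TopologicalSpace A] [TopologicalSpace B]
    (ε : bSph n × B → A) : Type :=
  TopPushout (fun zb : bSph n × B => ((bSphIncl n zb.1, zb.2) : Dsk n × B)) ε

instance (n : ℕ) {A B : Type} [TopologicalSpace A] [TopologicalSpace B]
    (ε : bSph n × B → A) : TopologicalSpace (AttachCell n ε) := by
  unfold AttachCell; infer_instance

/-! ### projIcc helper -/

def pr (t : ℝ) : unitInterval := Set.projIcc 0 1 zero_le_one t

lemma pr_continuous : Continuous pr := by unfold pr; exact continuous_projIcc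

lemma pr_coe (t : unitInterval) : pr (t : ℝ) = t := by
  simp [pr, Set.projIcc_val]

lemma pr_of_mem {t : ℝ} (h0 : 0 ≤ t) (h1 : t ≤ 1) : pr t = ⟨t, h0, h1⟩ :=
  Set.projIcc_of_mem _ ⟨h0, h1⟩

lemma pr_zero : pr 0 = 0 := by simp [pr]

lemma pr_one : pr 1 = 1 := by simp [pr]

lemma pr_nonpos {t : ℝ} (h : t ≤ 0) : pr t = 0 := by
  apply Subtype.ext
  show max 0 (min 1 t) = 0
  rw [min_eq_right (by linarith : t ≤ 1), max_eq_left h]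

lemma pr_ge_one {t : ℝ} (h : 1 ≤ t) : pr t = 1 := by
  apply Subtype.ext
  show max 0 (min 1 t) = 1
  rw [min_eq_left h, max_eq_right (by norm_num : (0:ℝ) ≤ 1)]

/-! ### PlainHomotopic basic lemmas -/

section HtpyAlg

variable {X Y Z : Type} [TopologicalSpace X] [TopologicalSpace Y] [TopologicalSpace Z]

theorem PlainHomotopic.refl {f : X → Y} (hf : Continuous f) : PlainHomotopic f f :=
  ⟨fun p => f p.1, hf.comp continuous_fst, fun _ => rfl, fun _ => rfl⟩

theorem PlainHomotopic.symm {f g : X → Y} (h : PlainHomotopic f g) : PlainHomotopic g f := by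
  obtain ⟨H, hc, h0, h1⟩ := h
  refine ⟨fun p => H (p.1, unitInterval.symm p.2), hc.comp (continuous_fst.prodMk
    (unitInterval.continuous_symm.comp continuous_snd)), fun x => ?_, fun x => ?_⟩
  · simpa using h1 x
  · simpa using h0 x

theorem PlainHomotopic.trans {f g h : X → Y} (hfg : PlainHomotopic f g)
    (hgh : PlainHomotopic g h) : PlainHomotopic f h := by
  obtain ⟨H, Hc, H0, H1⟩ := hfg
  obtain ⟨K, Kc, K0, K1⟩ := hgh
  refine ⟨fun p => if (p.2 : ℝ) ≤ 1 / 2 then H (p.1, pr (2 * p.2)) else K (p.1, pr (2 * p.2 - 1)),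
    ?_, fun x => ?_, fun x => ?_⟩
  · apply Continuous.if_le
    · exact Hc.comp (continuous_fst.prodMk (pr_continuous.comp
        (continuous_const.mul (continuous_subtype_val.comp continuous_snd))))
    · exact Kc.comp (continuous_fst.prodMk (pr_continuous.comp
        ((continuous_const.mul (continuous_subtype_val.comp continuous_snd)).sub
          continuous_const)))
    · exact continuous_subtype_val.comp continuous_snd
    · exact continuous_const
    · intro p hp
      rw [show (2 : ℝ) * p.2 - 1 = 0 by rw [hp]; ring,
        show (2 : ℝ) * p.2 = 1 by rw [hp]; ring, pr_one, pr_zero, H1, K0]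
  · have : ((0 : unitInterval) : ℝ) ≤ 1 / 2 := by norm_num
    simp only [this, if_pos]
    have : (2 : ℝ) * ((0 : unitInterval) : ℝ) = 0 := by norm_num
    rw [this, pr_zero, H0]
  · have h2 : ¬ (((1 : unitInterval) : ℝ) ≤ 1 / 2) := by norm_num
    simp only [h2, if_neg, not_false_iff]
    have : (2 : ℝ) * ((1 : unitInterval) : ℝ) - 1 = 1 := by norm_num
    rw [this, pr_one, K1]

theorem PlainHomotopic.comp_left {f g : X → Y} (h : PlainHomotopic f g) {k : Y → Z}
    (hk : Continuous k) : PlainHomotopic (k ∘ f) (k ∘ g) := by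
  obtain ⟨H, hc, h0, h1⟩ := h
  exact ⟨fun p => k (H p), hk.comp hc, fun x => by simp [Function.comp, h0 x],
    fun x => by simp [Function.comp, h1 x]⟩

theorem PlainHomotopic.comp_right {f g : Y → Z} (h : PlainHomotopic f g) {k : X → Y}
    (hk : Continuous k) : PlainHomotopic (f ∘ k) (g ∘ k) := by
  obtain ⟨H, hc, h0, h1⟩ := h
  exact ⟨fun p => H (k p.1, p.2), hc.comp ((hk.comp continuous_fst).prodMk continuous_snd),
    fun x => h0 (k x), fun x => h1 (k x)⟩

theorem IsHomotopyEquivMap.comp {f : X → Y} {g : Y → Z} (hg : IsHomotopyEquivMap g)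
    (hf : IsHomotopyEquivMap f) : IsHomotopyEquivMap (g ∘ f) := by
  obtain ⟨hgc, g', hg'c, hg1, hg2⟩ := hg
  obtain ⟨hfc, f', hf'c, hf1, hf2⟩ := hf
  refine ⟨hgc.comp hfc, f' ∘ g', hf'c.comp hg'c, ?_, ?_⟩
  · have h1 : PlainHomotopic (f' ∘ (g' ∘ g) ∘ f) (f' ∘ id ∘ f) :=
      ((hg1.comp_left hf'c).comp_right hfc)
    have h2 : PlainHomotopic (f' ∘ f) id := hf1
    exact h1.trans h2
  · have h1 : PlainHomotopic (g ∘ (f ∘ f') ∘ g') (g ∘ id ∘ g') :=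
      ((hf2.comp_left hgc).comp_right hg'c)
    exact h1.trans hg2

theorem PlainHomotopic.isHEM {F G : X → Y} (h : PlainHomotopic F G)
    (hG : IsHomotopyEquivMap G) (hF : Continuous F) : IsHomotopyEquivMap F := by
  obtain ⟨hGc, Gb, hGbc, h1, h2⟩ := hG
  refine ⟨hF, Gb, hGbc, ?_, ?_⟩
  · exact (h.comp_left hGbc).trans h1
  · exact (h.comp_right hGbc).trans h2

theorem isHEM_of_left_right {F : X → Y} {l r : Y → X} (hF : Continuous F) (hl : Continuous l)
    (hr : Continuous r) (h1 : PlainHomotopic (l ∘ F) id) (h2 : PlainHomotopic (F ∘ r) id) :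
    IsHomotopyEquivMap F := by
  have hlr : PlainHomotopic l r := by
    have a1 : PlainHomotopic (l ∘ (F ∘ r)) (l ∘ id) := h2.comp_left hl
    have a2 : PlainHomotopic ((l ∘ F) ∘ r) (id ∘ r) := h1.comp_right hr
    exact a1.symm.trans a2
  refine ⟨hF, l, hl, h1, ?_⟩
  have : PlainHomotopic (F ∘ l) (F ∘ r) := hlr.comp_left hF
  exact this.trans h2

theorem isHEM_of_left_heq {F : X → Y} {k : Y → X} (hF : Continuous F)
    (hk : IsHomotopyEquivMap k) (h : PlainHomotopic (k ∘ F) id) : IsHomotopyEquivMap F := by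
  obtain ⟨hkc, kb, hkbc, hk1, hk2⟩ := hk
  have h1 : PlainHomotopic (kb ∘ (k ∘ F)) (kb ∘ id) := h.comp_left hkbc
  have h2 : PlainHomotopic ((kb ∘ k) ∘ F) (id ∘ F) := hk1.comp_right hF
  have hFkb : PlainHomotopic F kb := (h2.symm.trans h1)
  exact hFkb.isHEM ⟨hkbc, k, hkc, hk2, hk1⟩ hF

theorem isHEM_of_right_heq {F : X → Y} {k : Y → X} (hF : Continuous F)
    (hk : IsHomotopyEquivMap k) (h : PlainHomotopic (F ∘ k) id) : IsHomotopyEquivMap F := by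
  obtain ⟨hkc, kb, hkbc, hk1, hk2⟩ := hk
  have h1 : PlainHomotopic ((F ∘ k) ∘ kb) (id ∘ kb) := h.comp_right hkbc
  have h2 : PlainHomotopic (F ∘ (k ∘ kb)) (F ∘ id) := hk2.comp_left hF
  have hFkb : PlainHomotopic F kb := (h2.symm.trans h1)
  exact hFkb.isHEM ⟨hkbc, k, hkc, hk2, hk1⟩ hF

end HtpyAlg
/-! ### Piecewise gluing on closed pieces -/

set_option linter.unusedSectionVars false

section Pw

variable {X Z : Type}

def pwLE (φ ψ : X → ℝ) (f : {p : X // φ p ≤ ψ p} → Z) (g : {p : X // ψ p ≤ φ p} → Z) :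
    X → Z :=
  fun p => if h : φ p ≤ ψ p then f ⟨p, h⟩ else g ⟨p, le_of_not_ge h⟩

theorem pwLE_left {φ ψ : X → ℝ} {f : {p : X // φ p ≤ ψ p} → Z} {g : {p : X // ψ p ≤ φ p} → Z}
    {p : X} (h : φ p ≤ ψ p) : pwLE φ ψ f g p = f ⟨p, h⟩ := dif_pos h

theorem pwLE_right {φ ψ : X → ℝ} {f : {p : X // φ p ≤ ψ p} → Z} {g : {p : X // ψ p ≤ φ p} → Z}
    (he : ∀ p h1 h2, f ⟨p, h1⟩ = g ⟨p, h2⟩) {p : X} (h : ψ p ≤ φ p) :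
    pwLE φ ψ f g p = g ⟨p, h⟩ := by
  by_cases h' : φ p ≤ ψ p
  · rw [pwLE_left h', he p h' h]
  · exact dif_neg h'

theorem pwLE_continuous [TopologicalSpace X] [TopologicalSpace Z] {φ ψ : X → ℝ}
    {f : {p : X // φ p ≤ ψ p} → Z}
    {g : {p : X // ψ p ≤ φ p} → Z} (hφ : Continuous φ) (hψ : Continuous ψ)
    (hf : Continuous f) (hg : Continuous g) (he : ∀ p h1 h2, f ⟨p, h1⟩ = g ⟨p, h2⟩) :
    Continuous (pwLE φ ψ f g) := by
  rw [continuous_iff_isClosed]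
  intro s hs
  have key : pwLE φ ψ f g ⁻¹' s =
      (Subtype.val '' (f ⁻¹' s)) ∪ (Subtype.val '' (g ⁻¹' s)) := by
    ext p
    constructor
    · intro hp
      by_cases h : φ p ≤ ψ p
      · refine Or.inl ⟨⟨p, h⟩, ?_, rfl⟩
        have hp' : pwLE φ ψ f g p ∈ s := hp
        rw [pwLE_left h] at hp'
        exact hp'
      · refine Or.inr ⟨⟨p, le_of_not_ge h⟩, ?_, rfl⟩
        have hp' : pwLE φ ψ f g p ∈ s := hp
        rw [pwLE_right he (le_of_not_ge h)] at hp'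
        exact hp'
    · rintro (⟨q, hq, rfl⟩ | ⟨q, hq, rfl⟩)
      · show pwLE φ ψ f g q.1 ∈ s
        rw [pwLE_left q.2]
        simpa using hq
      · show pwLE φ ψ f g q.1 ∈ s
        rw [pwLE_right he q.2]
        simpa using hq
  rw [key]
  exact ((isClosed_le hφ hψ).isClosedEmbedding_subtypeVal.isClosedMap _ (hs.preimage hf)).union
    ((isClosed_le hψ hφ).isClosedEmbedding_subtypeVal.isClosedMap _ (hs.preimage hg))

end Pw

/-! ### disk and sphere helpers -/

section Geo

variable {n : ℕ}

abbrev EE (n : ℕ) := EuclideanSpace ℝ (Fin n)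

def nr (d : Dsk n) : ℝ := ‖(d.1 : EE n)‖

lemma continuous_nr : Continuous (nr : Dsk n → ℝ) :=
  continuous_norm.comp continuous_subtype_val

lemma nr_nonneg (d : Dsk n) : 0 ≤ nr d := norm_nonneg _

lemma nr_le_one (d : Dsk n) : nr d ≤ 1 := by
  have := d.2
  rw [Metric.mem_closedBall, dist_zero_right] at this
  exact this

lemma nr_incl (z : bSph n) : nr (bSphIncl n z) = 1 := by
  have := z.2
  rw [mem_sphere_zero_iff_norm] at this
  exact this

lemma mem_dsk {x : EE n} (h : ‖x‖ ≤ 1) : x ∈ Metric.closedBall (0 : EE n) 1 := by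
  rwa [Metric.mem_closedBall, dist_zero_right]

def unz (x : EE n) : EE n := (max 4⁻¹ ‖x‖)⁻¹ • x

lemma unz_continuous : Continuous (unz (n := n)) := by
  apply Continuous.fun_smul _ continuous_id
  apply Continuous.inv₀ (continuous_const.max continuous_norm)
  intro x
  have : (0:ℝ) < max 4⁻¹ ‖x‖ := lt_of_lt_of_le (by norm_num) (le_max_left _ _)
  exact ne_of_gt this

lemma unz_eq {x : EE n} (h : (4:ℝ)⁻¹ ≤ ‖x‖) : unz x = ‖x‖⁻¹ • x := by
  rw [unz, max_eq_right h]

lemma unz_norm {x : EE n} (h : (4:ℝ)⁻¹ ≤ ‖x‖) : ‖unz x‖ = 1 := by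
  have hx : ‖x‖ ≠ 0 := ne_of_gt (lt_of_lt_of_le (by norm_num) h)
  rw [unz_eq h, norm_smul, norm_inv, norm_norm, inv_mul_cancel₀ hx]

def unzS (d : Dsk n) (h : (4:ℝ)⁻¹ ≤ nr d) : bSph n :=
  ⟨unz d.1, by rw [mem_sphere_zero_iff_norm]; exact unz_norm h⟩

lemma unzS_val (d : Dsk n) (h : (4:ℝ)⁻¹ ≤ nr d) : (unzS d h).1 = (nr d)⁻¹ • d.1 := unz_eq h

lemma unzS_incl (z : bSph n) (h : (4:ℝ)⁻¹ ≤ nr (bSphIncl n z)) : unzS (bSphIncl n z) h = z := by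
  apply Subtype.ext
  rw [unzS_val, nr_incl, inv_one, one_smul]
  rfl

/-- smul of a disk element, staying in the disk -/
def sclD (c : ℝ) (d : Dsk n) (h : ‖c • d.1‖ ≤ 1) : Dsk n := ⟨c • d.1, mem_dsk h⟩

lemma nr_sclD (c : ℝ) (d : Dsk n) (h : ‖c • d.1‖ ≤ 1) : nr (sclD c d h) = |c| * nr d := by
  rw [nr, sclD, norm_smul, Real.norm_eq_abs]; rfl

end Geo
/-! ### AttachCell machinery -/

section Attach

variable {n : ℕ} {A B Z : Type} [TopologicalSpace A] [TopologicalSpace B] [TopologicalSpace Z]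

/-- cell point -/
def cp (ε : bSph n × B → A) (p : Dsk n × B) : AttachCell n ε := Quot.mk _ (Sum.inl p)

/-- base point -/
def bp (ε : bSph n × B → A) (a : A) : AttachCell n ε := Quot.mk _ (Sum.inr a)

lemma cp_rel (ε : bSph n × B → A) (z : bSph n) (b : B) :
    cp ε (bSphIncl n z, b) = bp ε (ε (z, b)) :=
  Quot.sound ⟨(z, b), rfl, rfl⟩

lemma continuous_cp (ε : bSph n × B → A) : Continuous (cp ε) :=
  continuous_quot_mk.comp continuous_inl

lemma continuous_bp (ε : bSph n × B → A) : Continuous (bp ε) :=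
  continuous_quot_mk.comp continuous_inr

theorem attach_ind {ε : bSph n × B → A} {P : AttachCell n ε → Prop}
    (hc : ∀ p, P (cp ε p)) (hb : ∀ a, P (bp ε a)) : ∀ q, P q := by
  intro q
  induction q using Quot.ind with
  | _ s => cases s with
    | inl p => exact hc p
    | inr a => exact hb a

theorem attach_ext {ε : bSph n × B → A} {u v : AttachCell n ε → Z}
    (hc : ∀ p, u (cp ε p) = v (cp ε p)) (hb : ∀ a, u (bp ε a) = v (bp ε a)) : u = v :=
  funext (attach_ind hc hb)

theorem continuous_attach_desc {ε : bSph n × B → A} {u : Dsk n × B → Z} {v : A → Z}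
    {h : ∀ zb : bSph n × B, u (bSphIncl n zb.1, zb.2) = v (ε zb)} (hu : Continuous u)
    (hv : Continuous v) :
    Continuous (TopPushout.desc (fun zb : bSph n × B => ((bSphIncl n zb.1, zb.2) : Dsk n × B))
      ε u v h) := by
  refine (isQuotientMap_quot_mk.continuous_iff).mpr ?_
  exact hu.sumElim hv

/-- homotopy builder: a map on `AttachCell n ε × I` from compatible component homotopies -/
def htp (ε : bSph n × B → A) (cH : Dsk n × B × unitInterval → Z) (aH : A × unitInterval → Z)
    (hcompat : ∀ (z : bSph n) (b : B) (t : unitInterval),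
      cH (bSphIncl n z, b, t) = aH (ε (z, b), t)) :
    AttachCell n ε × unitInterval → Z :=
  fun q =>
    TopPushout.desc (fun zb : bSph n × B => ((bSphIncl n zb.1, zb.2) : Dsk n × B)) ε
      (fun d => cH (d.1, d.2, q.2)) (fun a => aH (a, q.2))
      (fun zb => hcompat zb.1 zb.2 q.2) q.1

theorem continuous_htp {ε : bSph n × B → A} {cH : Dsk n × B × unitInterval → Z}
    {aH : A × unitInterval → Z} {hcompat : ∀ (z : bSph n) (b : B) (t : unitInterval),
      cH (bSphIncl n z, b, t) = aH (ε (z, b), t)} (hcH : Continuous cH)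
    (haH : Continuous aH) : Continuous (htp ε cH aH hcompat) := by
  apply Topology.IsQuotientMap.continuous_lift_prod_left
    (isQuotientMap_quot_mk (r := fun x y : (Dsk n × B) ⊕ A =>
      ∃ a, x = Sum.inl ((fun zb : bSph n × B => ((bSphIncl n zb.1, zb.2) : Dsk n × B)) a)
        ∧ y = Sum.inr (ε a)))
  let e : ((Dsk n × B) ⊕ A) × unitInterval ≃ₜ ((Dsk n × B) × unitInterval) ⊕ (A × unitInterval) :=
    Homeomorph.sumProdDistrib
  have hψ : Continuous (Sum.elim (fun p : (Dsk n × B) × unitInterval => cH (p.1.1, p.1.2, p.2))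
      (fun p : A × unitInterval => aH p)) :=
    (hcH.comp ((continuous_fst.comp continuous_fst).prodMk
      ((continuous_snd.comp continuous_fst).prodMk continuous_snd))).sumElim haH
  have : Continuous ((Sum.elim (fun p : (Dsk n × B) × unitInterval => cH (p.1.1, p.1.2, p.2))
      (fun p : A × unitInterval => aH p)) ∘ e) := hψ.comp e.continuous
  convert this using 1
  funext q
  rcases q with ⟨s | a, t⟩ <;> rfl

theorem plainHomotopic_attach {ε : bSph n × B → A} {u v : AttachCell n ε → Z}
    (cH : Dsk n × B × unitInterval → Z) (aH : A × unitInterval → Z)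
    (hcH : Continuous cH) (haH : Continuous aH)
    (hcompat : ∀ (z : bSph n) (b : B) (t : unitInterval),
      cH (bSphIncl n z, b, t) = aH (ε (z, b), t))
    (hc0 : ∀ p : Dsk n × B, cH (p.1, p.2, 0) = u (cp ε p))
    (hb0 : ∀ a, aH (a, 0) = u (bp ε a))
    (hc1 : ∀ p : Dsk n × B, cH (p.1, p.2, 1) = v (cp ε p))
    (hb1 : ∀ a, aH (a, 1) = v (bp ε a)) : PlainHomotopic u v := by
  refine ⟨htp ε cH aH hcompat, continuous_htp hcH haH, ?_, ?_⟩
  · exact attach_ind (fun p => hc0 p) (fun a => hb0 a)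
  · exact attach_ind (fun p => hc1 p) (fun a => hb1 a)

/-- induced map between attachments -/
def indMap {A₂ B₂ : Type} [TopologicalSpace A₂] [TopologicalSpace B₂]
    (f : A → A₂) (g : B → B₂) (ε : bSph n × B → A) (ε₂ : bSph n × B₂ → A₂)
    (hc : ∀ (z : bSph n) (b : B), f (ε (z, b)) = ε₂ (z, g b)) :
    AttachCell n ε → AttachCell n ε₂ :=
  TopPushout.desc (fun zb : bSph n × B => ((bSphIncl n zb.1, zb.2) : Dsk n × B)) ε
    (fun p => cp ε₂ (p.1, g p.2)) (fun a => bp ε₂ (f a))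
    (fun zb => (cp_rel ε₂ zb.1 (g zb.2)).trans (congrArg (bp ε₂) (hc zb.1 zb.2).symm))

@[simp] lemma indMap_cp {A₂ B₂ : Type} [TopologicalSpace A₂] [TopologicalSpace B₂]
    {f : A → A₂} {g : B → B₂} {ε : bSph n × B → A} {ε₂ : bSph n × B₂ → A₂} {hc} (p : Dsk n × B) :
    indMap f g ε ε₂ hc (cp ε p) = cp ε₂ (p.1, g p.2) := rfl

@[simp] lemma indMap_bp {A₂ B₂ : Type} [TopologicalSpace A₂] [TopologicalSpace B₂]
    {f : A → A₂} {g : B → B₂} {ε : bSph n × B → A} {ε₂ : bSph n × B₂ → A₂} {hc} (a : A) :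
    indMap f g ε ε₂ hc (bp ε a) = bp ε₂ (f a) := rfl

theorem continuous_indMap {A₂ B₂ : Type} [TopologicalSpace A₂] [TopologicalSpace B₂]
    {f : A → A₂} {g : B → B₂} {ε : bSph n × B → A} {ε₂ : bSph n × B₂ → A₂} {hc}
    (hf : Continuous f) (hg : Continuous g) : Continuous (indMap f g ε ε₂ hc) :=
  continuous_attach_desc
    ((continuous_cp ε₂).comp (continuous_fst.prodMk (hg.comp continuous_snd)))
    ((continuous_bp ε₂).comp hf)

/-- key seam lemma: a cell point on the boundary sphere, written as a rescaling,
equals the corresponding base point. -/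
theorem cp_unit_eq_bp {ε : bSph n × B → A} (d : Dsk n) (hd : (4:ℝ)⁻¹ ≤ nr d) (e : Dsk n)
    (he : e.1 = (nr d)⁻¹ • d.1) (b : B) : cp ε (e, b) = bp ε (ε (unzS d hd, b)) := by
  have : e = bSphIncl n (unzS d hd) := by
    apply Subtype.ext
    rw [he]
    show _ = (unzS d hd).1
    rw [unzS_val]
  rw [this, cp_rel]

end Attach
/-! ### collar maps and the squash homotopy -/

section Collar

variable {n : ℕ} {A B : Type} [TopologicalSpace A] [TopologicalSpace B]

lemma two_smul_mem {d : Dsk n} (h : 2 * nr d ≤ 1) : ‖(2:ℝ) • d.1‖ ≤ 1 := by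
  rw [norm_smul, Real.norm_eq_abs]
  have h2 : |(2:ℝ)| = 2 := by norm_num
  rw [h2]
  exact h

lemma collar4 {d : Dsk n} (h : 1 ≤ 2 * nr d) : (4:ℝ)⁻¹ ≤ nr d := by linarith

/-- the cell component of the collar map -/
def colCell (ε₁ : bSph n × B → A) (ν : bSph n × B × unitInterval → A) :
    Dsk n × B → AttachCell n ε₁ :=
  pwLE (fun p => 2 * nr p.1) (fun _ => 1)
    (fun q => cp ε₁ (sclD 2 q.1.1 (two_smul_mem q.2), q.1.2))
    (fun q => bp ε₁ (ν (unzS q.1.1 (collar4 q.2), q.1.2, pr (2 * nr q.1.1 - 1))))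

lemma colCell_core (ε₁ : bSph n × B → A) (ν : bSph n × B × unitInterval → A) (p : Dsk n × B)
    (h : 2 * nr p.1 ≤ 1) :
    colCell ε₁ ν p = cp ε₁ (sclD 2 p.1 (two_smul_mem h), p.2) := by
  unfold colCell pwLE
  rw [dif_pos h]

lemma colCell_collar (ε₁ : bSph n × B → A) (ν : bSph n × B × unitInterval → A)
    (hν0 : ∀ z b, ν (z, b, 0) = ε₁ (z, b)) (p : Dsk n × B) (h : (1:ℝ) ≤ 2 * nr p.1) :
    colCell ε₁ ν p = bp ε₁ (ν (unzS p.1 (collar4 h), p.2, pr (2 * nr p.1 - 1))) := by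
  by_cases h' : 2 * nr p.1 ≤ 1
  · rw [colCell_core ε₁ ν p h']
    have hn : nr p.1 = 2⁻¹ := by linarith
    have hval : (sclD 2 p.1 (two_smul_mem h')).1 = (nr p.1)⁻¹ • p.1.1 := by
      show (2:ℝ) • p.1.1 = _
      rw [hn]; norm_num
    rw [cp_unit_eq_bp p.1 (collar4 h) _ hval p.2]
    have h0 : 2 * nr p.1 - 1 = 0 := by linarith
    rw [h0, pr_zero, hν0]
  · unfold colCell pwLE
    rw [dif_neg h']

theorem continuous_colCell (ε₁ : bSph n × B → A) (ν : bSph n × B × unitInterval → A)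
    (hν : Continuous ν) (hν0 : ∀ z b, ν (z, b, 0) = ε₁ (z, b)) :
    Continuous (colCell ε₁ ν) := by
  apply pwLE_continuous
  · exact continuous_const.mul (continuous_nr.comp continuous_fst)
  · exact continuous_const
  · apply (continuous_cp ε₁).comp
    apply Continuous.prodMk
    · exact Continuous.subtype_mk (by exact (continuous_const.fun_smul
        (continuous_subtype_val.comp (continuous_fst.comp continuous_subtype_val)))) _
    · exact continuous_snd.comp continuous_subtype_val
  · apply (continuous_bp ε₁).comp
    apply hν.comp
    refine Continuous.prodMk ?_ (Continuous.prodMk ?_ ?_)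
    · exact Continuous.subtype_mk (by exact (unz_continuous.comp
        (continuous_subtype_val.comp (continuous_fst.comp continuous_subtype_val)))) _
    · exact continuous_snd.comp continuous_subtype_val
    · exact pr_continuous.comp ((continuous_const.mul
        (continuous_nr.comp (continuous_fst.comp continuous_subtype_val))).sub continuous_const)
  · intro p h1 h2
    have e1 := colCell_core ε₁ ν p h1
    have e2 := colCell_collar ε₁ ν hν0 p h2
    unfold colCell at e1 e2
    exact e1.symm.trans e2

/-- the collar map `A ∪_{ε₀} (Dⁿ × B) → A ∪_{ε₁} (Dⁿ × B)` associated with a homotopy `ν`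
from `ε₁` (at 0) to `ε₀` (at 1). -/
lemma colCell_compat (ε₀ ε₁ : bSph n × B → A) (ν : bSph n × B × unitInterval → A)
    (hν0 : ∀ z b, ν (z, b, 0) = ε₁ (z, b)) (hν1 : ∀ z b, ν (z, b, 1) = ε₀ (z, b)) :
    ∀ zb : bSph n × B, colCell ε₁ ν (bSphIncl n zb.1, zb.2) = bp ε₁ (ε₀ zb) := by
  intro zb
  have h2 : (1:ℝ) ≤ 2 * nr ((bSphIncl n zb.1, zb.2) : Dsk n × B).1 := by
    rw [nr_incl]; norm_num
  rw [colCell_collar ε₁ ν hν0 (bSphIncl n zb.1, zb.2) h2]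
  have h1 : 2 * nr (bSphIncl n zb.1) - 1 = 1 := by rw [nr_incl]; norm_num
  rw [h1, pr_one, unzS_incl, hν1]

def colMap (ε₀ ε₁ : bSph n × B → A) (ν : bSph n × B × unitInterval → A)
    (hν0 : ∀ z b, ν (z, b, 0) = ε₁ (z, b)) (hν1 : ∀ z b, ν (z, b, 1) = ε₀ (z, b)) :
    AttachCell n ε₀ → AttachCell n ε₁ :=
  TopPushout.desc (fun zb : bSph n × B => ((bSphIncl n zb.1, zb.2) : Dsk n × B)) ε₀
    (colCell ε₁ ν) (bp ε₁) (colCell_compat ε₀ ε₁ ν hν0 hν1)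

@[simp] lemma colMap_bp {ε₀ ε₁ : bSph n × B → A} {ν} {hν0} {hν1} (a : A) :
    colMap ε₀ ε₁ ν hν0 hν1 (bp ε₀ a) = bp ε₁ a := rfl

lemma colMap_cp {ε₀ ε₁ : bSph n × B → A} {ν} {hν0} {hν1} (p : Dsk n × B) :
    colMap ε₀ ε₁ ν hν0 hν1 (cp ε₀ p) = colCell ε₁ ν p := rfl

theorem continuous_colMap {ε₀ ε₁ : bSph n × B → A} {ν} {hν0} {hν1} (hν : Continuous ν) :
    Continuous (colMap ε₀ ε₁ ν hν0 hν1) :=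
  continuous_attach_desc (continuous_colCell ε₁ ν hν hν0) (continuous_bp ε₁)

end Collar

/-! ### squash map and squash homotopy -/

section Squash

variable {n : ℕ} {A B : Type} [TopologicalSpace A] [TopologicalSpace B]

lemma sq_core_mem {c : ℝ} (hc4 : (4:ℝ)⁻¹ ≤ c) {d : Dsk n} (h : nr d ≤ c) :
    ‖c⁻¹ • d.1‖ ≤ 1 := by
  have hc : 0 < c := lt_of_lt_of_le (by norm_num) hc4
  rw [norm_smul, Real.norm_eq_abs, abs_of_pos (inv_pos.2 hc), inv_mul_le_iff₀ hc, mul_one]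
  exact h

def sqCell (ε₀ : bSph n × B → A) (c : ℝ) (hc4 : (4:ℝ)⁻¹ ≤ c) :
    Dsk n × B → AttachCell n ε₀ :=
  pwLE (fun p => nr p.1) (fun _ => c)
    (fun q => cp ε₀ (sclD c⁻¹ q.1.1 (sq_core_mem hc4 q.2), q.1.2))
    (fun q => bp ε₀ (ε₀ (unzS q.1.1 (le_trans hc4 q.2), q.1.2)))

lemma sqCell_core (ε₀ : bSph n × B → A) (c : ℝ) (hc4 : (4:ℝ)⁻¹ ≤ c) (p : Dsk n × B)
    (h : nr p.1 ≤ c) :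
    sqCell ε₀ c hc4 p = cp ε₀ (sclD c⁻¹ p.1 (sq_core_mem hc4 h), p.2) := by
  unfold sqCell pwLE
  rw [dif_pos h]

lemma sqCell_collar (ε₀ : bSph n × B → A) (c : ℝ) (hc4 : (4:ℝ)⁻¹ ≤ c) (p : Dsk n × B)
    (h : c ≤ nr p.1) :
    sqCell ε₀ c hc4 p = bp ε₀ (ε₀ (unzS p.1 (le_trans hc4 h), p.2)) := by
  by_cases h' : nr p.1 ≤ c
  · rw [sqCell_core ε₀ c hc4 p h']
    have hn : nr p.1 = c := le_antisymm h' h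
    exact cp_unit_eq_bp p.1 _ _ (by show c⁻¹ • p.1.1 = _; rw [hn]) p.2
  · unfold sqCell pwLE
    rw [dif_neg h']

lemma sqCell_compat (ε₀ : bSph n × B → A) (c : ℝ) (hc4 : (4:ℝ)⁻¹ ≤ c) (hc1 : c ≤ 1) :
    ∀ zb : bSph n × B, sqCell ε₀ c hc4 (bSphIncl n zb.1, zb.2) = bp ε₀ (ε₀ zb) := by
  intro zb
  have h2 : c ≤ nr ((bSphIncl n zb.1, zb.2) : Dsk n × B).1 := by rw [nr_incl]; exact hc1
  rw [sqCell_collar ε₀ c hc4 (bSphIncl n zb.1, zb.2) h2, unzS_incl]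

def sqMap (ε₀ : bSph n × B → A) (c : ℝ) (hc4 : (4:ℝ)⁻¹ ≤ c) (hc1 : c ≤ 1) :
    AttachCell n ε₀ → AttachCell n ε₀ :=
  TopPushout.desc (fun zb : bSph n × B => ((bSphIncl n zb.1, zb.2) : Dsk n × B)) ε₀
    (sqCell ε₀ c hc4) (bp ε₀) (sqCell_compat ε₀ c hc4 hc1)

@[simp] lemma sqMap_bp {ε₀ : bSph n × B → A} {c hc4 hc1} (a : A) :
    sqMap ε₀ c hc4 hc1 (bp ε₀ a) = bp ε₀ a := rfl

lemma sqMap_cp {ε₀ : bSph n × B → A} {c hc4 hc1} (p : Dsk n × B) :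
    sqMap ε₀ c hc4 hc1 (cp ε₀ p) = sqCell ε₀ c hc4 p := rfl

/-- the deformation used for the squash homotopy -/
def sqH (ε₀ : bSph n × B → A) (c : ℝ) (hc4 : (4:ℝ)⁻¹ ≤ c) (hc1 : c ≤ 1) :
    Dsk n × B × unitInterval → AttachCell n ε₀ :=
  pwLE (fun p => nr p.1) (fun p => c + (1 - c) * p.2.2)
    (fun q => cp ε₀ (sclD (c + (1 - c) * q.1.2.2)⁻¹ q.1.1
      (by
        have h1 : (0:ℝ) ≤ (1 - c) * q.1.2.2 := mul_nonneg (by linarith) q.1.2.2.2.1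
        exact sq_core_mem (by linarith) q.2), q.1.2.1))
    (fun q => bp ε₀ (ε₀ (unzS q.1.1
      (by
        have h1 : (0:ℝ) ≤ (1 - c) * q.1.2.2 := mul_nonneg (by linarith) q.1.2.2.2.1
        exact le_trans (by linarith) q.2), q.1.2.1)))

lemma sqH_den4' {c : ℝ} (hc4 : (4:ℝ)⁻¹ ≤ c) (hc1 : c ≤ 1) (t : unitInterval) :
    (4:ℝ)⁻¹ ≤ c + (1 - c) * t := by
  have h1 : (0:ℝ) ≤ (1 - c) * t := mul_nonneg (by linarith) t.2.1
  linarith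

lemma sqH_core (ε₀ : bSph n × B → A) (c : ℝ) (hc4 : (4:ℝ)⁻¹ ≤ c) (hc1 : c ≤ 1)
    (p : Dsk n × B × unitInterval) (h : nr p.1 ≤ c + (1 - c) * p.2.2) :
    sqH ε₀ c hc4 hc1 p = cp ε₀ (sclD (c + (1 - c) * p.2.2)⁻¹ p.1
      (sq_core_mem (sqH_den4' hc4 hc1 p.2.2) h), p.2.1) := by
  unfold sqH pwLE
  rw [dif_pos h]

lemma sqH_collar (ε₀ : bSph n × B → A) (c : ℝ) (hc4 : (4:ℝ)⁻¹ ≤ c) (hc1 : c ≤ 1)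
    (p : Dsk n × B × unitInterval) (h : c + (1 - c) * p.2.2 ≤ nr p.1) :
    sqH ε₀ c hc4 hc1 p = bp ε₀ (ε₀ (unzS p.1 (le_trans (sqH_den4' hc4 hc1 p.2.2) h), p.2.1)) := by
  by_cases h' : nr p.1 ≤ c + (1 - c) * p.2.2
  · rw [sqH_core ε₀ c hc4 hc1 p h']
    have hn : nr p.1 = c + (1 - c) * p.2.2 := le_antisymm h' h
    exact cp_unit_eq_bp p.1 _ _ (by show _ • p.1.1 = _; rw [hn]) p.2.1
  · unfold sqH pwLE
    rw [dif_neg h']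

theorem sqMap_homotopic (ε₀ : bSph n × B → A) (hε₀ : Continuous ε₀) (c : ℝ)
    (hc4 : (4:ℝ)⁻¹ ≤ c) (hc1 : c ≤ 1) : PlainHomotopic (sqMap ε₀ c hc4 hc1) id := by
  have den1 : ∀ t : unitInterval, c + (1 - c) * (t:ℝ) ≤ 1 := by
    intro t
    have h1 : (1 - c) * (t:ℝ) ≤ (1 - c) * 1 := mul_le_mul_of_nonneg_left t.2.2 (by linarith)
    linarith
  refine plainHomotopic_attach (sqH ε₀ c hc4 hc1) (fun p => bp ε₀ p.1) ?_
    ((continuous_bp ε₀).comp continuous_fst) ?_ ?_ (fun a => rfl) ?_ (fun a => rfl)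
  · -- continuity
    apply pwLE_continuous
    · exact continuous_nr.comp continuous_fst
    · exact continuous_const.add (continuous_const.mul
        (continuous_subtype_val.comp (continuous_snd.comp continuous_snd)))
    · apply (continuous_cp ε₀).comp
      refine Continuous.prodMk (Continuous.subtype_mk ?_ _)
        (continuous_fst.comp (continuous_snd.comp continuous_subtype_val))
      apply Continuous.fun_smul
      · apply Continuous.inv₀
        · exact continuous_const.add (continuous_const.mul (continuous_subtype_val.comp
            (continuous_snd.comp (continuous_snd.comp continuous_subtype_val))))
        · exact fun q => ne_of_gt (lt_of_lt_of_le (by norm_num)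
            (sqH_den4' hc4 hc1 q.1.2.2))
      · exact continuous_subtype_val.comp (continuous_fst.comp continuous_subtype_val)
    · apply (continuous_bp ε₀).comp
      apply hε₀.comp
      exact Continuous.prodMk (Continuous.subtype_mk (by exact (unz_continuous.comp
        (continuous_subtype_val.comp (continuous_fst.comp continuous_subtype_val)))) _)
        (continuous_fst.comp (continuous_snd.comp continuous_subtype_val))
    · intro p h1 h2
      have e1 := sqH_core ε₀ c hc4 hc1 p h1
      have e2 := sqH_collar ε₀ c hc4 hc1 p h2
      unfold sqH at e1 e2
      exact e1.symm.trans e2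
  · -- compatibility on the boundary sphere
    intro z b t
    have h2 : c + (1 - c) * (t:ℝ) ≤ nr (bSphIncl n z) := by rw [nr_incl]; exact den1 t
    rw [sqH_collar ε₀ c hc4 hc1 (bSphIncl n z, b, t) h2]
    show bp ε₀ (ε₀ (unzS (bSphIncl n z) _, b)) = _
    rw [unzS_incl]
  · -- time 0 : the squash map
    intro p
    have hden : c + (1 - c) * (((0:unitInterval)):ℝ) = c := by norm_num
    rcases le_total (nr p.1) c with h | h
    · rw [sqH_core ε₀ c hc4 hc1 (p.1, p.2, 0) (by rw [hden]; exact h),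
        sqMap_cp, sqCell_core ε₀ c hc4 p h]
      exact congrArg (cp ε₀) (Prod.ext (Subtype.ext (by
        show (c + (1 - c) * (((0:unitInterval)):ℝ))⁻¹ • p.1.1 = c⁻¹ • p.1.1
        rw [hden])) rfl)
    · rw [sqH_collar ε₀ c hc4 hc1 (p.1, p.2, 0) (by rw [hden]; exact h),
        sqMap_cp, sqCell_collar ε₀ c hc4 p h]
  · -- time 1 : the identity
    intro p
    have hden : c + (1 - c) * (((1:unitInterval)):ℝ) = 1 := by norm_num
    have h : nr p.1 ≤ c + (1 - c) * (((1:unitInterval)):ℝ) := by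
      rw [hden]; exact nr_le_one p.1
    rw [sqH_core ε₀ c hc4 hc1 (p.1, p.2, 1) h]
    show cp ε₀ (sclD _ p.1 _, p.2) = cp ε₀ p
    exact congrArg (cp ε₀) (Prod.ext (Subtype.ext (by
      show (c + (1 - c) * (((1:unitInterval)):ℝ))⁻¹ • p.1.1 = p.1.1
      rw [hden]; norm_num)) rfl)

end Squash
/-! ### the collar map is a homotopy equivalence -/

section ColInv

variable {n : ℕ} {A B : Type} [TopologicalSpace A] [TopologicalSpace B]

lemma four_smul_mem {d : Dsk n} (h : 4 * nr d ≤ 1) : ‖(4:ℝ) • d.1‖ ≤ 1 := by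
  rw [norm_smul, Real.norm_eq_abs]
  have h2 : |(4:ℝ)| = 4 := by norm_num
  rw [h2]
  exact h

lemma collar4of4 {d : Dsk n} (h : 1 ≤ 4 * nr d) : (4:ℝ)⁻¹ ≤ nr d := by linarith

lemma symm_pr {s : ℝ} {h0 : 0 ≤ s} {h1 : s ≤ 1} :
    unitInterval.symm (pr s) = pr (1 - s) := by
  apply Subtype.ext
  rw [pr_of_mem h0 h1, pr_of_mem (by linarith) (by linarith)]
  show 1 - s = 1 - s
  rfl

lemma unzS_sclD {c : ℝ} (hc : 0 < c) {d : Dsk n} {hm : ‖c • d.1‖ ≤ 1}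
    {h4 : (4:ℝ)⁻¹ ≤ nr (sclD c d hm)} {h4' : (4:ℝ)⁻¹ ≤ nr d} :
    unzS (sclD c d hm) h4 = unzS d h4' := by
  apply Subtype.ext
  rw [unzS_val, unzS_val, nr_sclD, abs_of_pos hc]
  show (c * nr d)⁻¹ • c • d.1 = _
  rw [smul_smul]
  congr 1
  have hr : nr d ≠ 0 := ne_of_gt (lt_of_lt_of_le (by norm_num) h4')
  field_simp

/-- reversed collar homotopy -/
def nrev (ν : bSph n × B × unitInterval → A) : bSph n × B × unitInterval → A :=
  fun q => ν (q.1, q.2.1, unitInterval.symm q.2.2)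

lemma nrev_continuous {ν : bSph n × B × unitInterval → A} (hν : Continuous ν) :
    Continuous (nrev ν) :=
  hν.comp (continuous_fst.prodMk ((continuous_fst.comp continuous_snd).prodMk
    (unitInterval.continuous_symm.comp (continuous_snd.comp continuous_snd))))

lemma nrev_zero {ν : bSph n × B × unitInterval → A} {ε₀ : bSph n × B → A}
    (hν1 : ∀ z b, ν (z, b, 1) = ε₀ (z, b)) : ∀ z b, nrev ν (z, b, 0) = ε₀ (z, b) := by
  intro z b
  show ν (z, b, unitInterval.symm 0) = _
  rw [unitInterval.symm_zero, hν1]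

lemma nrev_one {ν : bSph n × B × unitInterval → A} {ε₁ : bSph n × B → A}
    (hν0 : ∀ z b, ν (z, b, 0) = ε₁ (z, b)) : ∀ z b, nrev ν (z, b, 1) = ε₁ (z, b) := by
  intro z b
  show ν (z, b, unitInterval.symm 1) = _
  rw [unitInterval.symm_one, hν0]

lemma nrev_nrev {ν : bSph n × B × unitInterval → A} : nrev (nrev ν) = ν := by
  funext q
  show ν (q.1, q.2.1, unitInterval.symm (unitInterval.symm q.2.2)) = _
  rw [unitInterval.symm_symm]

/-- stage-1 homotopy cell map for the collar inverse -/
def colH (ε₀ : bSph n × B → A) (ν : bSph n × B × unitInterval → A) :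
    Dsk n × B × unitInterval → AttachCell n ε₀ :=
  pwLE (fun p => 4 * nr p.1) (fun _ => 1)
    (fun q => cp ε₀ (sclD 4 q.1.1 (four_smul_mem q.2), q.1.2.1))
    (fun q => bp ε₀ (ν (unzS q.1.1 (collar4of4 q.2), q.1.2.1,
      pr (max (max (2 - 4 * nr q.1.1) (2 * nr q.1.1 - 1)) q.1.2.2))))

lemma colH_core (ε₀ : bSph n × B → A) (ν : bSph n × B × unitInterval → A)
    (p : Dsk n × B × unitInterval) (h : 4 * nr p.1 ≤ 1) :
    colH ε₀ ν p = cp ε₀ (sclD 4 p.1 (four_smul_mem h), p.2.1) := by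
  unfold colH pwLE
  rw [dif_pos h]

lemma colH_collar (ε₀ : bSph n × B → A) (ν : bSph n × B × unitInterval → A)
    (hν1 : ∀ z b, ν (z, b, 1) = ε₀ (z, b))
    (p : Dsk n × B × unitInterval) (h : (1:ℝ) ≤ 4 * nr p.1) :
    colH ε₀ ν p = bp ε₀ (ν (unzS p.1 (collar4of4 h), p.2.1,
      pr (max (max (2 - 4 * nr p.1) (2 * nr p.1 - 1)) p.2.2))) := by
  by_cases h' : 4 * nr p.1 ≤ 1
  · rw [colH_core ε₀ ν p h']
    have hn : nr p.1 = 4⁻¹ := by linarith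
    rw [cp_unit_eq_bp p.1 (collar4of4 h) _ (by show (4:ℝ) • p.1.1 = _; rw [hn]; norm_num) p.2.1]
    have hm : max (max (2 - 4 * nr p.1) (2 * nr p.1 - 1)) (p.2.2:ℝ) = 1 := by
      rw [hn]
      have : max (2 - 4 * (4:ℝ)⁻¹) (2 * (4:ℝ)⁻¹ - 1) = 1 := by norm_num
      rw [this]
      exact max_eq_left p.2.2.2.2
    rw [hm, pr_one, hν1]
  · unfold colH pwLE
    rw [dif_neg h']

theorem continuous_colH (ε₀ : bSph n × B → A) (ν : bSph n × B × unitInterval → A)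
    (hν : Continuous ν) (hν1 : ∀ z b, ν (z, b, 1) = ε₀ (z, b)) :
    Continuous (colH ε₀ ν) := by
  apply pwLE_continuous
  · exact continuous_const.mul (continuous_nr.comp continuous_fst)
  · exact continuous_const
  · apply (continuous_cp ε₀).comp
    refine Continuous.prodMk (Continuous.subtype_mk (by exact (continuous_const.fun_smul
      (continuous_subtype_val.comp (continuous_fst.comp continuous_subtype_val)))) _)
      ((continuous_fst.comp (continuous_snd.comp continuous_subtype_val)))
  · apply (continuous_bp ε₀).comp
    apply hν.comp
    refine Continuous.prodMk ?_ (Continuous.prodMk ?_ ?_)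
    · exact Continuous.subtype_mk (by exact (unz_continuous.comp
        (continuous_subtype_val.comp (continuous_fst.comp continuous_subtype_val)))) _
    · exact continuous_fst.comp (continuous_snd.comp continuous_subtype_val)
    · refine pr_continuous.comp (Continuous.max (Continuous.max ?_ ?_) ?_)
      · exact continuous_const.sub (continuous_const.mul
          (continuous_nr.comp (continuous_fst.comp continuous_subtype_val)))
      · exact (continuous_const.mul
          (continuous_nr.comp (continuous_fst.comp continuous_subtype_val))).sub continuous_const
      · exact continuous_subtype_val.comp
          (continuous_snd.comp (continuous_snd.comp continuous_subtype_val))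
  · intro p h1 h2
    have e1 := colH_core ε₀ ν p h1
    have e2 := colH_collar ε₀ ν hν1 p h2
    unfold colH at e1 e2
    exact e1.symm.trans e2

theorem colMap_inv (ε₀ ε₁ : bSph n × B → A) (hε₀ : Continuous ε₀)
    (ν : bSph n × B × unitInterval → A) (hν : Continuous ν)
    (hν0 : ∀ z b, ν (z, b, 0) = ε₁ (z, b)) (hν1 : ∀ z b, ν (z, b, 1) = ε₀ (z, b)) :
    PlainHomotopic
      (colMap ε₁ ε₀ (nrev ν) (nrev_zero hν1) (nrev_one hν0) ∘ colMap ε₀ ε₁ ν hν0 hν1) id := by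
  have step1 : PlainHomotopic
      (colMap ε₁ ε₀ (nrev ν) (nrev_zero hν1) (nrev_one hν0) ∘ colMap ε₀ ε₁ ν hν0 hν1)
      (sqMap ε₀ 4⁻¹ (le_refl _) (by norm_num)) := by
    refine plainHomotopic_attach (colH ε₀ ν) (fun p => bp ε₀ p.1)
      (continuous_colH ε₀ ν hν hν1) ((continuous_bp ε₀).comp continuous_fst) ?_ ?_ ?_ ?_ ?_
    · -- boundary compatibility
      intro z b t
      have h1 : (1:ℝ) ≤ 4 * nr ((bSphIncl n z, b, t) : Dsk n × B × unitInterval).1 := by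
        rw [nr_incl]; norm_num
      rw [colH_collar ε₀ ν hν1 (bSphIncl n z, b, t) h1]
      have hm : max (max (2 - 4 * nr (bSphIncl n z)) (2 * nr (bSphIncl n z) - 1)) (t:ℝ) = 1 := by
        rw [nr_incl]
        have : max (2 - 4 * (1:ℝ)) (2 * 1 - 1) = 1 := by norm_num
        rw [this]
        exact max_eq_left t.2.2
      rw [hm, pr_one, hν1, unzS_incl]
    · -- time 0 : agrees with the composite
      intro p
      show colH ε₀ ν (p.1, p.2, 0) =
        colMap ε₁ ε₀ (nrev ν) (nrev_zero hν1) (nrev_one hν0) (colMap ε₀ ε₁ ν hν0 hν1 (cp ε₀ p))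
      rcases le_total (2 * nr p.1) 1 with hcase | hcase
      · -- inner half : first collar map is a core rescaling
        rw [colMap_cp, colCell_core ε₁ ν p hcase, colMap_cp]
        have hnr2 : nr (sclD 2 p.1 (two_smul_mem hcase)) = 2 * nr p.1 := by
          rw [nr_sclD]; norm_num
        rcases le_total (4 * nr p.1) 1 with hc2 | hc2
        · rw [colCell_core ε₀ (nrev ν) _ (by
            show 2 * nr (sclD 2 p.1 (two_smul_mem hcase)) ≤ 1
            rw [hnr2]; linarith)]
          rw [colH_core ε₀ ν (p.1, p.2, 0) hc2]
          refine congrArg (cp ε₀) (Prod.ext (Subtype.ext ?_) rfl)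
          show (4:ℝ) • p.1.1 = (2:ℝ) • (2:ℝ) • p.1.1
          rw [smul_smul]; norm_num
        · rw [colCell_collar ε₀ (nrev ν) (nrev_zero hν1) _ (by
            show (1:ℝ) ≤ 2 * nr (sclD 2 p.1 (two_smul_mem hcase))
            rw [hnr2]; linarith)]
          rw [colH_collar ε₀ ν hν1 (p.1, p.2, 0) hc2]
          have hmax : max (max (2 - 4 * nr p.1) (2 * nr p.1 - 1)) (((0:unitInterval)):ℝ)
              = 2 - 4 * nr p.1 := by
            rw [max_eq_left (by linarith : 2 * nr p.1 - 1 ≤ 2 - 4 * nr p.1)]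
            exact max_eq_left (by
              show ((0:unitInterval):ℝ) ≤ 2 - 4 * nr p.1
              have := nr_le_one p.1
              show (0:ℝ) ≤ 2 - 4 * nr p.1
              linarith)
          rw [hmax]
          simp only [nrev]
          rw [unzS_sclD (by norm_num : (0:ℝ) < 2), hnr2, symm_pr,
            show 1 - (2 * (2 * nr p.1) - 1) = 2 - 4 * nr p.1 from by ring]
          all_goals linarith
      · -- outer half : first collar map lands in the base
        rw [colMap_cp, colCell_collar ε₁ ν hν0 p hcase, colMap_bp,
          colH_collar ε₀ ν hν1 (p.1, p.2, 0) (by linarith)]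
        have hmax : max (max (2 - 4 * nr p.1) (2 * nr p.1 - 1)) (((0:unitInterval)):ℝ)
            = 2 * nr p.1 - 1 := by
          rw [max_eq_right (by linarith : 2 - 4 * nr p.1 ≤ 2 * nr p.1 - 1)]
          exact max_eq_left (by
            show ((0:unitInterval):ℝ) ≤ 2 * nr p.1 - 1
            show (0:ℝ) ≤ 2 * nr p.1 - 1
            linarith)
        rw [hmax]
    · intro a; rfl
    · -- time 1 : the quarter squash map
      intro p
      rcases le_total (4 * nr p.1) 1 with hcase | hcase
      · rw [colH_core ε₀ ν (p.1, p.2, 1) hcase, sqMap_cp,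
          sqCell_core ε₀ 4⁻¹ (le_refl _) p (by linarith)]
        refine congrArg (cp ε₀) (Prod.ext (Subtype.ext ?_) rfl)
        show (4:ℝ) • p.1.1 = ((4:ℝ)⁻¹)⁻¹ • p.1.1
        norm_num
      · rw [colH_collar ε₀ ν hν1 (p.1, p.2, 1) hcase, sqMap_cp,
          sqCell_collar ε₀ 4⁻¹ (le_refl _) p (by linarith)]
        have hmax : max (max (2 - 4 * nr p.1) (2 * nr p.1 - 1)) (((1:unitInterval)):ℝ) = 1 := by
          apply max_eq_right
          show max (2 - 4 * nr p.1) (2 * nr p.1 - 1) ≤ ((1:unitInterval):ℝ)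
          show max (2 - 4 * nr p.1) (2 * nr p.1 - 1) ≤ (1:ℝ)
          have h1 := nr_le_one p.1
          exact max_le (by linarith) (by linarith)
        rw [hmax, pr_one, hν1]
    · intro a; rfl
  exact step1.trans (sqMap_homotopic ε₀ hε₀ 4⁻¹ (le_refl _) (by norm_num))

lemma colMap_congr {ε₀ ε₁ : bSph n × B → A} {ν ν' : bSph n × B × unitInterval → A}
    (h : ν = ν') {hν0 hν1 hν0' hν1'} :
    colMap ε₀ ε₁ ν hν0 hν1 = colMap ε₀ ε₁ ν' hν0' hν1' := by
  subst h
  rfl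

theorem colMap_isHEM {ε₀ ε₁ : bSph n × B → A} (hε₀ : Continuous ε₀) (hε₁ : Continuous ε₁)
    {ν : bSph n × B × unitInterval → A} (hν : Continuous ν)
    {hν0 : ∀ z b, ν (z, b, 0) = ε₁ (z, b)} {hν1 : ∀ z b, ν (z, b, 1) = ε₀ (z, b)} :
    IsHomotopyEquivMap (colMap ε₀ ε₁ ν hν0 hν1) := by
  refine ⟨continuous_colMap hν, colMap ε₁ ε₀ (nrev ν) (nrev_zero hν1) (nrev_one hν0),
    continuous_colMap (nrev_continuous hν), colMap_inv ε₀ ε₁ hε₀ ν hν hν0 hν1, ?_⟩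
  have h2 := colMap_inv ε₁ ε₀ hε₁ (nrev ν) (nrev_continuous hν)
    (nrev_zero hν1) (nrev_one hν0)
  have e : colMap ε₀ ε₁ (nrev (nrev ν)) (nrev_zero (nrev_one hν0)) (nrev_one (nrev_zero hν1))
      = colMap ε₀ ε₁ ν hν0 hν1 := colMap_congr nrev_nrev
  rw [e] at h2
  exact h2

end ColInv
/-! ### main homotopy lemma, A-side -/

section L2side

variable {n : ℕ} {A₁ A₂ B : Type} [TopologicalSpace A₁] [TopologicalSpace A₂]
  [TopologicalSpace B]

/-- stage-1 homotopy cell map for the A-side lemma -/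
def L2H (ε₁ : bSph n × B → A₁) (H : A₁ × unitInterval → A₁) :
    Dsk n × B × unitInterval → AttachCell n ε₁ :=
  pwLE (fun p => 2 * nr p.1) (fun _ => 1)
    (fun q => cp ε₁ (sclD 2 q.1.1 (two_smul_mem q.2), q.1.2.1))
    (fun q => bp ε₁ (H (ε₁ (unzS q.1.1 (collar4 q.2), q.1.2.1),
      pr (max (2 - 2 * nr q.1.1) q.1.2.2))))

lemma L2H_core (ε₁ : bSph n × B → A₁) (H : A₁ × unitInterval → A₁)
    (p : Dsk n × B × unitInterval) (h : 2 * nr p.1 ≤ 1) :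
    L2H ε₁ H p = cp ε₁ (sclD 2 p.1 (two_smul_mem h), p.2.1) := by
  unfold L2H pwLE
  rw [dif_pos h]

lemma L2H_collar (ε₁ : bSph n × B → A₁) (H : A₁ × unitInterval → A₁)
    (hH1 : ∀ a, H (a, 1) = a) (p : Dsk n × B × unitInterval) (h : (1:ℝ) ≤ 2 * nr p.1) :
    L2H ε₁ H p = bp ε₁ (H (ε₁ (unzS p.1 (collar4 h), p.2.1),
      pr (max (2 - 2 * nr p.1) p.2.2))) := by
  by_cases h' : 2 * nr p.1 ≤ 1
  · rw [L2H_core ε₁ H p h']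
    have hn : nr p.1 = 2⁻¹ := by linarith
    rw [cp_unit_eq_bp p.1 (collar4 h) _ (by show (2:ℝ) • p.1.1 = _; rw [hn]; norm_num) p.2.1]
    have hm : max (2 - 2 * nr p.1) (p.2.2:ℝ) = 1 := by
      rw [hn, show 2 - 2 * (2:ℝ)⁻¹ = 1 from by norm_num]
      exact max_eq_left p.2.2.2.2
    rw [hm, pr_one, hH1]
  · unfold L2H pwLE
    rw [dif_neg h']

theorem continuous_L2H (ε₁ : bSph n × B → A₁) (H : A₁ × unitInterval → A₁)
    (hε₁ : Continuous ε₁) (hH : Continuous H) (hH1 : ∀ a, H (a, 1) = a) :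
    Continuous (L2H ε₁ H) := by
  apply pwLE_continuous
  · exact continuous_const.mul (continuous_nr.comp continuous_fst)
  · exact continuous_const
  · apply (continuous_cp ε₁).comp
    exact Continuous.prodMk (Continuous.subtype_mk (by exact (continuous_const.fun_smul
      (continuous_subtype_val.comp (continuous_fst.comp continuous_subtype_val)))) _)
      ((continuous_fst.comp (continuous_snd.comp continuous_subtype_val)))
  · apply (continuous_bp ε₁).comp
    apply hH.comp
    refine Continuous.prodMk (hε₁.comp (Continuous.prodMk ?_ ?_)) (pr_continuous.comp
      (Continuous.max ?_ ?_))
    · exact Continuous.subtype_mk (by exact (unz_continuous.comp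
        (continuous_subtype_val.comp (continuous_fst.comp continuous_subtype_val)))) _
    · exact continuous_fst.comp (continuous_snd.comp continuous_subtype_val)
    · exact continuous_const.sub (continuous_const.mul
        (continuous_nr.comp (continuous_fst.comp continuous_subtype_val)))
    · exact continuous_subtype_val.comp
        (continuous_snd.comp (continuous_snd.comp continuous_subtype_val))
  · intro p h1 h2
    have e1 := L2H_core ε₁ H p h1
    have e2 := L2H_collar ε₁ H hH1 p h2
    unfold L2H at e1 e2
    exact e1.symm.trans e2

theorem L2_homotopic (h : A₁ → A₂) (h' : A₂ → A₁) (H : A₁ × unitInterval → A₁)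
    (hH : Continuous H) (hH0 : ∀ a, H (a, 0) = h' (h a)) (hH1 : ∀ a, H (a, 1) = a)
    (ε₁ : bSph n × B → A₁) (hε₁ : Continuous ε₁) (ε₂ : bSph n × B → A₂)
    (ε₃ : bSph n × B → A₁)
    (he₂ : ∀ z b, ε₂ (z, b) = h (ε₁ (z, b))) (he₃ : ∀ z b, ε₃ (z, b) = h' (ε₂ (z, b)))
    {ν : bSph n × B × unitInterval → A₁}
    (hνdef : ν = fun q => H (ε₁ (q.1, q.2.1), unitInterval.symm q.2.2))
    (hν0 : ∀ z b, ν (z, b, 0) = ε₁ (z, b)) (hν1 : ∀ z b, ν (z, b, 1) = ε₃ (z, b))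
    (hcP : ∀ z b, h (ε₁ (z, b)) = ε₂ (z, id b)) (hcQ : ∀ z b, h' (ε₂ (z, b)) = ε₃ (z, id b)) :
    PlainHomotopic
      (colMap ε₃ ε₁ ν hν0 hν1 ∘ indMap h' id ε₂ ε₃ hcQ ∘ indMap h id ε₁ ε₂ hcP) id := by
  subst hνdef
  refine PlainHomotopic.trans (g := sqMap ε₁ 2⁻¹ (by norm_num) (by norm_num)) ?_
    (sqMap_homotopic ε₁ hε₁ 2⁻¹ (by norm_num) (by norm_num))
  refine plainHomotopic_attach (L2H ε₁ H) (fun p => bp ε₁ (H p))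
    (continuous_L2H ε₁ H hε₁ hH hH1) ((continuous_bp ε₁).comp hH) ?_ ?_ ?_ ?_ ?_
  · -- boundary compatibility
    intro z b t
    have h1 : (1:ℝ) ≤ 2 * nr ((bSphIncl n z, b, t) : Dsk n × B × unitInterval).1 := by
      rw [nr_incl]; norm_num
    rw [L2H_collar ε₁ H hH1 (bSphIncl n z, b, t) h1]
    have hm : max (2 - 2 * nr (bSphIncl n z)) (t:ℝ) = (t:ℝ) := by
      rw [nr_incl, show 2 - 2 * (1:ℝ) = 0 from by norm_num]
      exact max_eq_right t.2.1
    rw [hm, pr_coe, unzS_incl]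
  · -- time 0
    intro p
    simp only [Function.comp_apply, indMap_cp, id_eq]
    rcases le_total (2 * nr p.1) 1 with hcase | hcase
    · rw [L2H_core ε₁ H (p.1, p.2, 0) hcase, colMap_cp,
        colCell_core ε₁ _ (p.1, p.2) hcase]
      try rfl
    · rw [L2H_collar ε₁ H hH1 (p.1, p.2, 0) hcase, colMap_cp,
        colCell_collar ε₁ _ hν0 (p.1, p.2) hcase]
      beta_reduce
      have hsym := symm_pr (s := 2 * nr p.1 - 1) (h0 := by linarith)
        (h1 := by have := nr_le_one p.1; linarith)
      have hm : max (2 - 2 * nr p.1) (((0:unitInterval)):ℝ) = 2 - 2 * nr p.1 := by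
        apply max_eq_left
        show ((0:unitInterval):ℝ) ≤ 2 - 2 * nr p.1
        show (0:ℝ) ≤ 2 - 2 * nr p.1
        have := nr_le_one p.1
        linarith
      rw [hm, hsym, show 1 - (2 * nr p.1 - 1) = 2 - 2 * nr p.1 from by ring]
  · -- base, time 0
    intro a
    simp only [Function.comp_apply, indMap_bp, colMap_bp]
    rw [hH0]
  · -- time 1
    intro p
    rcases le_total (2 * nr p.1) 1 with hcase | hcase
    · rw [L2H_core ε₁ H (p.1, p.2, 1) hcase, sqMap_cp,
        sqCell_core ε₁ 2⁻¹ (by norm_num) p (by linarith)]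
      refine congrArg (cp ε₁) (Prod.ext (Subtype.ext ?_) rfl)
      show (2:ℝ) • p.1.1 = ((2:ℝ)⁻¹)⁻¹ • p.1.1
      norm_num
    · rw [L2H_collar ε₁ H hH1 (p.1, p.2, 1) hcase, sqMap_cp,
        sqCell_collar ε₁ 2⁻¹ (by norm_num) p (by linarith)]
      have hm : max (2 - 2 * nr p.1) (((1:unitInterval)):ℝ) = 1 := by
        apply max_eq_right
        show 2 - 2 * nr p.1 ≤ ((1:unitInterval):ℝ)
        show 2 - 2 * nr p.1 ≤ (1:ℝ)
        linarith
      rw [hm, pr_one, hH1]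
  · -- base, time 1
    intro a
    show bp ε₁ (H (a, 1)) = _
    rw [hH1]
    rfl

end L2side

/-! ### main homotopy lemma, B-side -/

section Rside

variable {n : ℕ} {A' B₁ B₂ : Type} [TopologicalSpace A'] [TopologicalSpace B₁]
  [TopologicalSpace B₂]

/-- stage-1 homotopy cell map for the B-side lemma -/
def RH (σ : bSph n × B₂ → A') (G : B₂ × unitInterval → B₂) :
    Dsk n × B₂ × unitInterval → AttachCell n σ :=
  pwLE (fun p => 2 * nr p.1) (fun _ => 1)
    (fun q => cp σ (sclD 2 q.1.1 (two_smul_mem q.2), G (q.1.2.1, q.1.2.2)))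
    (fun q => bp σ (σ (unzS q.1.1 (collar4 q.2),
      G (q.1.2.1, pr (max (2 * nr q.1.1 - 1) q.1.2.2)))))

lemma RH_core (σ : bSph n × B₂ → A') (G : B₂ × unitInterval → B₂)
    (p : Dsk n × B₂ × unitInterval) (h : 2 * nr p.1 ≤ 1) :
    RH σ G p = cp σ (sclD 2 p.1 (two_smul_mem h), G (p.2.1, p.2.2)) := by
  unfold RH pwLE
  rw [dif_pos h]

lemma RH_collar (σ : bSph n × B₂ → A') (G : B₂ × unitInterval → B₂)
    (p : Dsk n × B₂ × unitInterval) (h : (1:ℝ) ≤ 2 * nr p.1) :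
    RH σ G p = bp σ (σ (unzS p.1 (collar4 h),
      G (p.2.1, pr (max (2 * nr p.1 - 1) p.2.2)))) := by
  by_cases h' : 2 * nr p.1 ≤ 1
  · rw [RH_core σ G p h']
    have hn : nr p.1 = 2⁻¹ := by linarith
    rw [cp_unit_eq_bp p.1 (collar4 h) _ (by show (2:ℝ) • p.1.1 = _; rw [hn]; norm_num) _]
    have hm : max (2 * nr p.1 - 1) (p.2.2:ℝ) = (p.2.2:ℝ) := by
      rw [hn, show 2 * (2:ℝ)⁻¹ - 1 = 0 from by norm_num]
      exact max_eq_right p.2.2.2.1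
    rw [hm, pr_coe]
  · unfold RH pwLE
    rw [dif_neg h']

theorem continuous_RH (σ : bSph n × B₂ → A') (G : B₂ × unitInterval → B₂)
    (hσ : Continuous σ) (hG : Continuous G) : Continuous (RH σ G) := by
  apply pwLE_continuous
  · exact continuous_const.mul (continuous_nr.comp continuous_fst)
  · exact continuous_const
  · apply (continuous_cp σ).comp
    refine Continuous.prodMk (Continuous.subtype_mk (by exact (continuous_const.fun_smul
      (continuous_subtype_val.comp (continuous_fst.comp continuous_subtype_val)))) _)
      (hG.comp (Continuous.prodMk ?_ ?_))
    · exact continuous_fst.comp (continuous_snd.comp continuous_subtype_val)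
    · exact continuous_snd.comp (continuous_snd.comp continuous_subtype_val)
  · apply (continuous_bp σ).comp
    apply hσ.comp
    refine Continuous.prodMk (Continuous.subtype_mk (by exact (unz_continuous.comp
      (continuous_subtype_val.comp (continuous_fst.comp continuous_subtype_val)))) _)
      (hG.comp (Continuous.prodMk ?_ ?_))
    · exact continuous_fst.comp (continuous_snd.comp continuous_subtype_val)
    · refine pr_continuous.comp (Continuous.max ?_ ?_)
      · exact (continuous_const.mul
          (continuous_nr.comp (continuous_fst.comp continuous_subtype_val))).sub continuous_const
      · exact continuous_subtype_val.comp
          (continuous_snd.comp (continuous_snd.comp continuous_subtype_val))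
  · intro p h1 h2
    have e1 := RH_core σ G p h1
    have e2 := RH_collar σ G p h2
    unfold RH at e1 e2
    exact e1.symm.trans e2

theorem R_homotopic (h : B₁ → B₂) (hb : B₂ → B₁) (G : B₂ × unitInterval → B₂)
    (hG : Continuous G) (hG0 : ∀ b, G (b, 0) = h (hb b)) (hG1 : ∀ b, G (b, 1) = b)
    (σ : bSph n × B₂ → A') (hσ : Continuous σ) (τ : bSph n × B₁ → A')
    (ρ : bSph n × B₂ → A')
    {ν : bSph n × B₂ × unitInterval → A'}
    (hνdef : ν = fun q => σ (q.1, G (q.2.1, q.2.2)))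
    (hν0 : ∀ z b, ν (z, b, 0) = ρ (z, b)) (hν1 : ∀ z b, ν (z, b, 1) = σ (z, b))
    (hcR : ∀ z b, id (ρ (z, b)) = τ (z, hb b)) (hcΨ : ∀ z b, id (τ (z, b)) = σ (z, h b)) :
    PlainHomotopic
      (indMap id h τ σ hcΨ ∘ indMap id hb ρ τ hcR ∘ colMap σ ρ ν hν0 hν1) id := by
  subst hνdef
  refine PlainHomotopic.trans (g := sqMap σ 2⁻¹ (by norm_num) (by norm_num)) ?_
    (sqMap_homotopic σ hσ 2⁻¹ (by norm_num) (by norm_num))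
  refine plainHomotopic_attach (RH σ G) (fun p => bp σ p.1)
    (continuous_RH σ G hσ hG) ((continuous_bp σ).comp continuous_fst) ?_ ?_ ?_ ?_ ?_
  · -- boundary compatibility
    intro z b t
    have h1 : (1:ℝ) ≤ 2 * nr ((bSphIncl n z, b, t) : Dsk n × B₂ × unitInterval).1 := by
      rw [nr_incl]; norm_num
    rw [RH_collar σ G (bSphIncl n z, b, t) h1]
    have hm : max (2 * nr (bSphIncl n z) - 1) (t:ℝ) = 1 := by
      rw [nr_incl, show 2 * (1:ℝ) - 1 = 1 from by norm_num]
      exact max_eq_left t.2.2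
    rw [hm, pr_one, hG1, unzS_incl]
  · -- time 0
    intro p
    simp only [Function.comp_apply]
    rcases le_total (2 * nr p.1) 1 with hcase | hcase
    · rw [RH_core σ G (p.1, p.2, 0) hcase, colMap_cp, colCell_core ρ _ p hcase]
      simp only [indMap_cp, id_eq]
      have h0 : G (p.2, (0:unitInterval)) = h (hb p.2) := hG0 p.2
      rw [h0]
      try rfl
    · rw [RH_collar σ G (p.1, p.2, 0) hcase, colMap_cp, colCell_collar ρ _ hν0 p hcase]
      simp only [indMap_bp, id_eq]
      have hm : max (2 * nr p.1 - 1) (((0:unitInterval)):ℝ) = 2 * nr p.1 - 1 := by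
        apply max_eq_left
        show ((0:unitInterval):ℝ) ≤ 2 * nr p.1 - 1
        show (0:ℝ) ≤ 2 * nr p.1 - 1
        linarith
      rw [hm]
  · -- base, time 0
    intro a
    simp only [Function.comp_apply, colMap_bp, indMap_bp, id_eq]
  · -- time 1
    intro p
    rcases le_total (2 * nr p.1) 1 with hcase | hcase
    · rw [RH_core σ G (p.1, p.2, 1) hcase, sqMap_cp,
        sqCell_core σ 2⁻¹ (by norm_num) p (by linarith)]
      rw [hG1]
      refine congrArg (cp σ) (Prod.ext (Subtype.ext ?_) rfl)
      show (2:ℝ) • p.1.1 = ((2:ℝ)⁻¹)⁻¹ • p.1.1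
      norm_num
    · rw [RH_collar σ G (p.1, p.2, 1) hcase, sqMap_cp,
        sqCell_collar σ 2⁻¹ (by norm_num) p (by linarith)]
      have hm : max (2 * nr p.1 - 1) (((1:unitInterval)):ℝ) = 1 := by
        apply max_eq_right
        show 2 * nr p.1 - 1 ≤ ((1:unitInterval):ℝ)
        show 2 * nr p.1 - 1 ≤ (1:ℝ)
        have := nr_le_one p.1
        linarith
      rw [hm, pr_one, hG1]
  · -- base, time 1
    intro a
    rfl

end Rside
/-! ### abstract ladder lemmas -/

section Ladder

variable {X Y Z W : Type} [TopologicalSpace X] [TopologicalSpace Y] [TopologicalSpace Z]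
  [TopologicalSpace W]

theorem isHEM_of_two_left {P : X → Y} {Q : Y → Z} {c : Z → X} {Q' : Z → W} {c' : W → Y}
    (hP : Continuous P) (hQ : Continuous Q) (hQ' : Continuous Q')
    (hc : IsHomotopyEquivMap c) (hc' : IsHomotopyEquivMap c')
    (h1 : PlainHomotopic (c ∘ Q ∘ P) id) (h2 : PlainHomotopic (c' ∘ Q' ∘ Q) id) :
    IsHomotopyEquivMap P := by
  have hcC := hc.1
  obtain ⟨hcc, cb, hcbc, hcb1, hcb2⟩ := hc
  have e1 : PlainHomotopic (cb ∘ (c ∘ Q ∘ P)) (cb ∘ id) := h1.comp_left hcbc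
  have e2 : PlainHomotopic ((cb ∘ c) ∘ (Q ∘ P)) (id ∘ (Q ∘ P)) :=
    hcb1.comp_right (hQ.comp hP)
  have eQP : PlainHomotopic (Q ∘ P) cb := e2.symm.trans e1
  have e3 : PlainHomotopic ((Q ∘ P) ∘ c) (cb ∘ c) := eQP.comp_right hcC
  have e4 : PlainHomotopic (Q ∘ (P ∘ c)) id := e3.trans hcb1
  have hQheq : IsHomotopyEquivMap Q :=
    isHEM_of_left_right hQ (hc'.1.comp hQ') (hP.comp hcC) h2 e4
  have hcQ : IsHomotopyEquivMap (c ∘ Q) :=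
    IsHomotopyEquivMap.comp ⟨hcC, cb, hcbc, hcb1, hcb2⟩ hQheq
  exact isHEM_of_left_heq hP hcQ h1

theorem isHEM_of_two_right {Ψ : Y → X} {R : Z → Y} {c : X → Z} {R' : W → Z} {c' : Y → W}
    (hΨ : Continuous Ψ) (hR : Continuous R) (hR' : Continuous R')
    (hc : IsHomotopyEquivMap c) (hc' : IsHomotopyEquivMap c')
    (h1 : PlainHomotopic (Ψ ∘ R ∘ c) id) (h2 : PlainHomotopic (R ∘ R' ∘ c') id) :
    IsHomotopyEquivMap Ψ := by
  have hcC := hc.1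
  obtain ⟨hcc, cb, hcbc, hcb1, hcb2⟩ := hc
  have e1 : PlainHomotopic ((Ψ ∘ R ∘ c) ∘ cb) (id ∘ cb) := h1.comp_right hcbc
  have e2 : PlainHomotopic ((Ψ ∘ R) ∘ (c ∘ cb)) ((Ψ ∘ R) ∘ id) := hcb2.comp_left (hΨ.comp hR)
  have eΨR : PlainHomotopic (Ψ ∘ R) cb := e2.symm.trans e1
  have e3 : PlainHomotopic (c ∘ (Ψ ∘ R)) (c ∘ cb) := eΨR.comp_left hcC
  have e4 : PlainHomotopic ((c ∘ Ψ) ∘ R) id := e3.trans hcb2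
  have hRheq : IsHomotopyEquivMap R :=
    isHEM_of_left_right hR (hcC.comp hΨ) (hR'.comp hc'.1) e4 h2
  have hRc : IsHomotopyEquivMap (R ∘ c) :=
    IsHomotopyEquivMap.comp hRheq ⟨hcC, cb, hcbc, hcb1, hcb2⟩
  exact isHEM_of_right_heq hΨ hRc h1

end Ladder

/-! ### the two sides -/

section Sides

variable {n : ℕ}

theorem indMap_left_isHEM {A₁ A₂ B : Type} [TopologicalSpace A₁] [TopologicalSpace A₂]
    [TopologicalSpace B] (h : A₁ → A₂) (hh : IsHomotopyEquivMap h)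
    (ε₁ : bSph n × B → A₁) (hε₁ : Continuous ε₁) (ε₂ : bSph n × B → A₂)
    (he₂ : ∀ z b, ε₂ (z, b) = h (ε₁ (z, b)))
    {hc : ∀ (z : bSph n) (b : B), h (ε₁ (z, b)) = ε₂ (z, id b)} :
    IsHomotopyEquivMap (indMap h id ε₁ ε₂ hc) := by
  obtain ⟨hhc, h', hh'c, hu, hcou⟩ := hh
  obtain ⟨H, hH, H0, H1⟩ := hu
  obtain ⟨H', hH', H'0, H'1⟩ := hcou
  have hε₂c : Continuous ε₂ := by
    rw [show ε₂ = fun p => h (ε₁ p) from funext fun p => he₂ p.1 p.2]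
    exact hhc.comp hε₁
  have hε₃c : Continuous (fun p : bSph n × B => h' (ε₂ p)) := hh'c.comp hε₂c
  have hε₄c : Continuous (fun p : bSph n × B => h ((fun q : bSph n × B => h' (ε₂ q)) p)) :=
    hhc.comp hε₃c
  have hν₁c : Continuous (fun q : bSph n × B × unitInterval =>
      H (ε₁ (q.1, q.2.1), unitInterval.symm q.2.2)) :=
    hH.comp ((hε₁.comp (continuous_fst.prodMk (continuous_fst.comp continuous_snd))).prodMk
      (unitInterval.continuous_symm.comp (continuous_snd.comp continuous_snd)))
  have hν₂c : Continuous (fun q : bSph n × B × unitInterval =>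
      H' (ε₂ (q.1, q.2.1), unitInterval.symm q.2.2)) :=
    hH'.comp ((hε₂c.comp (continuous_fst.prodMk (continuous_fst.comp continuous_snd))).prodMk
      (unitInterval.continuous_symm.comp (continuous_snd.comp continuous_snd)))
  have hν₁0 : ∀ (z : bSph n) (b : B),
      (fun q : bSph n × B × unitInterval => H (ε₁ (q.1, q.2.1), unitInterval.symm q.2.2))
        (z, b, 0) = ε₁ (z, b) := by
    intro z b
    show H (ε₁ (z, b), unitInterval.symm 0) = _
    rw [unitInterval.symm_zero, H1]
    rfl
  have hν₁1 : ∀ (z : bSph n) (b : B),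
      (fun q : bSph n × B × unitInterval => H (ε₁ (q.1, q.2.1), unitInterval.symm q.2.2))
        (z, b, 1) = (fun p : bSph n × B => h' (ε₂ p)) (z, b) := by
    intro z b
    show H (ε₁ (z, b), unitInterval.symm 1) = h' (ε₂ (z, b))
    rw [unitInterval.symm_one, H0, he₂]
    rfl
  have hν₂0 : ∀ (z : bSph n) (b : B),
      (fun q : bSph n × B × unitInterval => H' (ε₂ (q.1, q.2.1), unitInterval.symm q.2.2))
        (z, b, 0) = ε₂ (z, b) := by
    intro z b
    show H' (ε₂ (z, b), unitInterval.symm 0) = _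
    rw [unitInterval.symm_zero, H'1]
    rfl
  have hν₂1 : ∀ (z : bSph n) (b : B),
      (fun q : bSph n × B × unitInterval => H' (ε₂ (q.1, q.2.1), unitInterval.symm q.2.2))
        (z, b, 1) = (fun p : bSph n × B => h ((fun q : bSph n × B => h' (ε₂ q)) p)) (z, b) := by
    intro z b
    show H' (ε₂ (z, b), unitInterval.symm 1) = h (h' (ε₂ (z, b)))
    rw [unitInterval.symm_one, H'0]
    rfl
  have inst1 := L2_homotopic h h' H hH H0 H1 ε₁ hε₁ ε₂ (fun p => h' (ε₂ p)) he₂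
    (fun z b => rfl) rfl hν₁0 hν₁1 hc (fun z b => rfl)
  have inst2 := L2_homotopic h' h H' hH' H'0 H'1 ε₂ hε₂c (fun p => h' (ε₂ p))
    (fun p => h ((fun q : bSph n × B => h' (ε₂ q)) p)) (fun z b => rfl) (fun z b => rfl) rfl
    hν₂0 hν₂1 (fun z b => rfl) (fun z b => rfl)
  exact isHEM_of_two_left (continuous_indMap hhc continuous_id)
    (continuous_indMap hh'c continuous_id) (continuous_indMap hhc continuous_id)
    (colMap_isHEM hε₃c hε₁ hν₁c) (colMap_isHEM hε₄c hε₂c hν₂c) inst1 inst2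

theorem indMap_right_isHEM {A' B₁ B₂ : Type} [TopologicalSpace A'] [TopologicalSpace B₁]
    [TopologicalSpace B₂] (g : B₁ → B₂) (hg : IsHomotopyEquivMap g)
    (σ : bSph n × B₂ → A') (hσ : Continuous σ) (τ : bSph n × B₁ → A')
    (hτ : ∀ z b, τ (z, b) = σ (z, g b))
    {hcΨ : ∀ (z : bSph n) (b : B₁), id (τ (z, b)) = σ (z, g b)} :
    IsHomotopyEquivMap (indMap id g τ σ hcΨ) := by
  obtain ⟨hgc, gb, hgbc, hu, hco⟩ := hg
  obtain ⟨G, hG, G0, G1⟩ := hu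
  obtain ⟨G', hG', G'0, G'1⟩ := hco
  have hτc : Continuous τ := by
    rw [show τ = fun p => σ (p.1, g p.2) from funext fun p => hτ p.1 p.2]
    exact hσ.comp (continuous_fst.prodMk (hgc.comp continuous_snd))
  have hρc : Continuous (fun p : bSph n × B₂ => σ (p.1, g (gb p.2))) :=
    hσ.comp (continuous_fst.prodMk (hgc.comp (hgbc.comp continuous_snd)))
  have hρ'c : Continuous (fun p : bSph n × B₁ => τ (p.1, gb (g p.2))) :=
    hτc.comp (continuous_fst.prodMk (hgbc.comp (hgc.comp continuous_snd)))
  have hνc : Continuous (fun q : bSph n × B₂ × unitInterval => σ (q.1, G' (q.2.1, q.2.2))) :=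
    hσ.comp (continuous_fst.prodMk (hG'.comp ((continuous_fst.comp continuous_snd).prodMk
      (continuous_snd.comp continuous_snd))))
  have hν'c : Continuous (fun q : bSph n × B₁ × unitInterval => τ (q.1, G (q.2.1, q.2.2))) :=
    hτc.comp (continuous_fst.prodMk (hG.comp ((continuous_fst.comp continuous_snd).prodMk
      (continuous_snd.comp continuous_snd))))
  have hν0 : ∀ (z : bSph n) (b : B₂),
      (fun q : bSph n × B₂ × unitInterval => σ (q.1, G' (q.2.1, q.2.2))) (z, b, 0) =
        (fun p : bSph n × B₂ => σ (p.1, g (gb p.2))) (z, b) := by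
    intro z b
    show σ (z, G' (b, 0)) = _
    rw [G'0]
    rfl
  have hν1 : ∀ (z : bSph n) (b : B₂),
      (fun q : bSph n × B₂ × unitInterval => σ (q.1, G' (q.2.1, q.2.2))) (z, b, 1) =
        σ (z, b) := by
    intro z b
    show σ (z, G' (b, 1)) = _
    rw [G'1]
    rfl
  have hν'0 : ∀ (z : bSph n) (b : B₁),
      (fun q : bSph n × B₁ × unitInterval => τ (q.1, G (q.2.1, q.2.2))) (z, b, 0) =
        (fun p : bSph n × B₁ => τ (p.1, gb (g p.2))) (z, b) := by
    intro z b
    show τ (z, G (b, 0)) = _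
    rw [G0]
    rfl
  have hν'1 : ∀ (z : bSph n) (b : B₁),
      (fun q : bSph n × B₁ × unitInterval => τ (q.1, G (q.2.1, q.2.2))) (z, b, 1) =
        τ (z, b) := by
    intro z b
    show τ (z, G (b, 1)) = _
    rw [G1]
    rfl
  have hcR : ∀ (z : bSph n) (b : B₂),
      id ((fun p : bSph n × B₂ => σ (p.1, g (gb p.2))) (z, b)) = τ (z, gb b) :=
    fun z b => (hτ z (gb b)).symm
  have hcR' : ∀ (z : bSph n) (b : B₁),
      id ((fun p : bSph n × B₁ => τ (p.1, gb (g p.2))) (z, b)) =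
        (fun p : bSph n × B₂ => σ (p.1, g (gb p.2))) (z, g b) :=
    fun z b => hτ z (gb (g b))
  have inst1 := R_homotopic g gb G' hG' G'0 G'1 σ hσ τ
    (fun p : bSph n × B₂ => σ (p.1, g (gb p.2))) rfl hν0 hν1 hcR hcΨ
  have inst2 := R_homotopic gb g G hG G0 G1 τ hτc
    (fun p : bSph n × B₂ => σ (p.1, g (gb p.2)))
    (fun p : bSph n × B₁ => τ (p.1, gb (g p.2))) rfl hν'0 hν'1 hcR' hcR
  exact isHEM_of_two_right (continuous_indMap continuous_id hgc)
    (continuous_indMap continuous_id hgbc) (continuous_indMap continuous_id hgc)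
    (colMap_isHEM hσ hρc hνc) (colMap_isHEM hτc hρ'c hν'c) inst1 inst2

end Sides
/-- **Gluing cells along homotopy equivalences.**
Let `f : A → A'` and `g : B → B'` be homotopy equivalences and `ε : Sⁿ⁻¹ × B → A`,
`ε' : Sⁿ⁻¹ × B' → A'` continuous maps satisfying `f ∘ ε = ε' ∘ (id × g)`.  Then the induced
map `f ∪ (id × g) : A ∪_ε (Dⁿ × B) → A' ∪_{ε'} (Dⁿ × B')` is a homotopy equivalence. -/
theorem attachCell_homotopyEquiv (n : ℕ) {A A' B B' : Type}
    [TopologicalSpace A] [TopologicalSpace A'] [TopologicalSpace B] [TopologicalSpace B']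
    (f : A → A') (g : B → B') (ε : bSph n × B → A) (ε' : bSph n × B' → A')
    (hf : IsHomotopyEquivMap f) (hg : IsHomotopyEquivMap g)
    (hε : Continuous ε) (hε' : Continuous ε')
    (hcomm : ∀ p : bSph n × B, f (ε p) = ε' (p.1, g p.2)) :
    IsHomotopyEquivMap
      (TopPushout.desc (fun zb : bSph n × B => ((bSphIncl n zb.1, zb.2) : Dsk n × B)) ε
        (fun p : Dsk n × B => (Quot.mk _ (Sum.inl (p.1, g p.2)) : AttachCell n ε'))
        (fun a : A => Quot.mk _ (Sum.inr (f a)))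
        (fun a => (Quot.sound ⟨(a.1, g a.2), rfl, rfl⟩).trans
          ((congrArg (fun w => (Quot.mk _ (Sum.inr w) : AttachCell n ε')) (hcomm a)).symm)) :
      AttachCell n ε → AttachCell n ε') := by
  have hgoal : (TopPushout.desc (fun zb : bSph n × B => ((bSphIncl n zb.1, zb.2) : Dsk n × B)) ε
        (fun p : Dsk n × B => (Quot.mk _ (Sum.inl (p.1, g p.2)) : AttachCell n ε'))
        (fun a : A => Quot.mk _ (Sum.inr (f a)))
        (fun a => (Quot.sound ⟨(a.1, g a.2), rfl, rfl⟩).trans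
          ((congrArg (fun w => (Quot.mk _ (Sum.inr w) : AttachCell n ε')) (hcomm a)).symm)) :
      AttachCell n ε → AttachCell n ε') =
      (indMap id g (fun p : bSph n × B => ε' (p.1, g p.2)) ε' (fun z b => rfl)) ∘
        (indMap f id ε (fun p : bSph n × B => ε' (p.1, g p.2))
          (fun z b => hcomm (z, b))) :=
    attach_ext (fun p => rfl) (fun a => rfl)
  rw [hgoal]
  exact IsHomotopyEquivMap.comp
    (indMap_right_isHEM g hg ε' hε' (fun p : bSph n × B => ε' (p.1, g p.2)) (fun z b => rfl))
    (indMap_left_isHEM f hf ε hε (fun p : bSph n × B => ε' (p.1, g p.2))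
      (fun z b => (hcomm (z, b)).symm))
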